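/- If T solves −k ΔT = 0 in Ω with −k ∂T/∂n = h_bl (T − T_bl) on Γ_body and −k ∂T/∂n = (h_amb + h_r)(T − T_amb) + E on Γ_amb, where all coefficients are positive, E ≥ 0, and T_amb ≤ T_bl, then T ≤ T_bl everywhere in Ω. -/

import Mathlib

/-!
Weak maximum principle plus a boundary flux argument. Adding `ε |x|²` to `T` makes its Laplacian
strictly positive, which rules out an interior maximum; letting `ε → 0` shows that `T` attains its
maximum over `closure Ω` at a boundary point `x₀`. Since `T` cannot increase when one moves from
`x₀` into `Ω` along `-n`, the outward flux `∂T/∂n (x₀)` is nonnegative, and each Robin condition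
then forces `T x₀ ≤ T_bl` (on `Γ_amb` even `T x₀ ≤ T_amb`, as `E ≥ 0`).
-/

open MeasureTheory Real Set

/-- Partial derivative in direction `i`. -/
noncomputable def pd (f : (Fin 3 → ℝ) → ℝ) (i : Fin 3) (x : Fin 3 → ℝ) : ℝ :=
  fderiv ℝ f x (Pi.single i 1)

/-- Divergence of a vector field on `ℝ³`. -/
noncomputable def vdiv (u : (Fin 3 → ℝ) → (Fin 3 → ℝ)) (x : Fin 3 → ℝ) : ℝ :=
  ∑ i, pd (fun y => u y i) i x

/-- Laplacian of a scalar field on `ℝ³`. -/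
noncomputable def lap (f : (Fin 3 → ℝ) → ℝ) (x : Fin 3 → ℝ) : ℝ :=
  ∑ i, pd (pd f i) i x

/-- Euclidean norm of a vector in `ℝ³`. -/
noncomputable def enorm3 (g : Fin 3 → ℝ) : ℝ := Real.sqrt (∑ i, g i ^ 2)

/-- `n` is a unit outward-pointing normal field on the boundary of `Ω`. -/
def IsOutwardNormal (Ω : Set (Fin 3 → ℝ)) (n : (Fin 3 → ℝ) → (Fin 3 → ℝ)) : Prop :=
  ∀ x ∈ frontier Ω, enorm3 (n x) = 1 ∧
    ∃ ε > 0, ∀ t ∈ Set.Ioo (0:ℝ) ε, x + t • n x ∉ closure Ω ∧ x - t • n x ∈ Ω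

open Filter Topology

theorem IsLocalMax.deriv_deriv_nonpos {f : ℝ → ℝ} {a : ℝ} (h : IsLocalMax f a)
    (hf : ContinuousAt f a) : deriv (deriv f) a ≤ 0 := by
  by_contra! hpos
  have hmin : IsLocalMin f a := isLocalMin_of_deriv_deriv_pos hpos h.deriv_eq_zero hf
  have hconst : f =ᶠ[𝓝 a] fun _ => f a :=
    (hmin.and h).mono fun y hy => le_antisymm hy.2 hy.1
  have hderiv : deriv f =ᶠ[𝓝 a] fun _ => 0 :=
    hconst.eventually_nhds.mono fun t (ht : f =ᶠ[𝓝 t] fun _ => f a) =>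
      ht.deriv_eq.trans (deriv_const t _)
  rw [hderiv.deriv_eq, deriv_const] at hpos
  exact hpos.false

section Directional

variable {E : Type*} [NormedAddCommGroup E] [NormedSpace ℝ E]

theorem ContDiffAt.differentiableAt_fderiv_apply {f : E → ℝ} {z : E} (hf : ContDiffAt ℝ 2 f z)
    (v : E) : DifferentiableAt ℝ (fun y => fderiv ℝ f y v) z :=
  ((hf.fderiv_right (m := 1) (by norm_num)).clm_apply contDiffAt_const).differentiableAt
    one_ne_zero

theorem IsLocalMax.fderiv_fderiv_apply_nonpos {f : E → ℝ} {z : E} (h : IsLocalMax f z)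
    (hf : ContDiffAt ℝ 2 f z) (v : E) : fderiv ℝ (fun y => fderiv ℝ f y v) z v ≤ 0 := by
  have hline : ∀ t : ℝ, HasDerivAt (fun t : ℝ => z + t • v) v t := fun t => by
    simpa using ((hasDerivAt_id t).smul_const v).const_add z
  have hline_zero : z + (0 : ℝ) • v = z := by simp
  have hline_tendsto : Tendsto (fun t : ℝ => z + t • v) (𝓝 0) (𝓝 z) :=
    (continuous_const.add (continuous_id.smul continuous_const)).tendsto' 0 z hline_zero
  have hdiff : ∀ᶠ t : ℝ in 𝓝 0, DifferentiableAt ℝ f (z + t • v) :=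
    hline_tendsto.eventually ((hf.eventually (by simp)).mono fun y hy => hy.differentiableAt two_ne_zero)
  have hderiv : deriv (fun t : ℝ => f (z + t • v)) =ᶠ[𝓝 0] fun t => fderiv ℝ f (z + t • v) v :=
    hdiff.mono fun t ht => (ht.hasFDerivAt.comp_hasDerivAt t (hline t)).deriv
  have hderiv2 : HasDerivAt (fun t : ℝ => fderiv ℝ f (z + t • v) v)
      (fderiv ℝ (fun y => fderiv ℝ f y v) z v) 0 :=
    (hf.differentiableAt_fderiv_apply v).hasFDerivAt.comp_hasDerivAt_of_eq 0 (hline 0) hline_zero.symm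
  have hmax : IsLocalMax (fun t : ℝ => f (z + t • v)) 0 :=
    IsMaxFilter.comp_tendsto (g := fun t : ℝ => z + t • v) (by rwa [hline_zero]) hline_tendsto
  have := hmax.deriv_deriv_nonpos (hf.continuousAt.comp_of_eq (hline 0).continuousAt hline_zero)
  rwa [hderiv.deriv_eq, hderiv2.deriv] at this

theorem IsMaxOn.fderiv_apply_nonneg {f : E → ℝ} {s : Set E} {x v : E} (hmax : IsMaxOn f s x)
    {ε : ℝ} (hε : 0 < ε) (hseg : ∀ t ∈ Ioo 0 ε, x - t • v ∈ s) : 0 ≤ fderiv ℝ f x v := by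
  by_cases hf : DifferentiableAt ℝ f x
  · have hcone : -v ∈ posTangentConeAt s x := mem_posTangentConeAt_of_frequently_mem <|
      (eventually_of_mem (Ioo_mem_nhdsGT hε) fun t ht => by
        simpa [sub_eq_add_neg] using hseg t ht).frequently
    simpa using hmax.localize.hasFDerivWithinAt_nonpos hf.hasFDerivAt.hasFDerivWithinAt hcone
  · -- junk value: `fderiv` is `0` where `f` is not differentiable
    simp [fderiv_zero_of_not_differentiableAt hf]

end Directional

theorem fderiv_apply_eq_sum_pd (f : (Fin 3 → ℝ) → ℝ) (x v : Fin 3 → ℝ) :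
    fderiv ℝ f x v = ∑ i, v i * pd f i x := by
  conv_lhs => rw [← Finset.univ_sum_single v]
  simp only [map_sum, pd]
  refine Finset.sum_congr rfl fun i _ => ?_
  rw [← smul_eq_mul, ← map_smul, ← Pi.single_smul, smul_eq_mul, mul_one]

theorem pd_add {f g : (Fin 3 → ℝ) → ℝ} {x : Fin 3 → ℝ} (hf : DifferentiableAt ℝ f x)
    (hg : DifferentiableAt ℝ g x) (i : Fin 3) :
    pd (fun y => f y + g y) i x = pd f i x + pd g i x := by
  simp [pd, fderiv_fun_add hf hg]

theorem pd_const_mul_apply (c : ℝ) (i : Fin 3) (x : Fin 3 → ℝ) :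
    pd (fun y => c * y i) i x = c := by
  simp [pd, ((hasFDerivAt_apply (𝕜 := ℝ) i x).const_mul c).fderiv]

theorem pd_const_mul_sum_sq (c : ℝ) (i : Fin 3) (x : Fin 3 → ℝ) :
    pd (fun y => c * ∑ j, y j ^ 2) i x = 2 * c * x i := by
  have hq : HasFDerivAt (fun y : Fin 3 → ℝ => c * ∑ j, y j ^ 2)
      (c • ∑ j, (2 * x j) • ContinuousLinearMap.proj (R := ℝ) (φ := fun _ : Fin 3 => ℝ) j) x :=
    HasFDerivAt.const_mul (HasFDerivAt.fun_sum fun j _ => by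
      simpa using (hasFDerivAt_apply (𝕜 := ℝ) j x).pow 2) c
  simp only [pd, hq.fderiv, smul_apply, sum_apply, ContinuousLinearMap.proj_apply, Pi.single_apply,
    smul_eq_mul, mul_ite, mul_one, mul_zero, Finset.sum_ite_eq', Finset.mem_univ, ↓reduceIte]
  ring

theorem lap_const_mul_sum_sq (c : ℝ) (x : Fin 3 → ℝ) :
    lap (fun y => c * ∑ j, y j ^ 2) x = 6 * c := by
  have hpd : ∀ i, pd (fun y => c * ∑ j, y j ^ 2) i = fun y => 2 * c * y i := fun i =>
    funext (pd_const_mul_sum_sq c i)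
  simp only [lap, hpd, pd_const_mul_apply, Finset.sum_const, Finset.card_univ, Fintype.card_fin]
  ring

theorem lap_add {f g : (Fin 3 → ℝ) → ℝ} {x : Fin 3 → ℝ} (hf : ContDiffAt ℝ 2 f x)
    (hg : ContDiffAt ℝ 2 g x) : lap (fun y => f y + g y) x = lap f x + lap g x := by
  rw [lap, lap, lap, ← Finset.sum_add_distrib]
  refine Finset.sum_congr rfl fun i _ => ?_
  have hpd : pd (fun y => f y + g y) i =ᶠ[𝓝 x] fun y => pd f i y + pd g i y :=
    ((hf.eventually (by simp)).and (hg.eventually (by simp))).mono fun y hy =>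
      pd_add (hy.1.differentiableAt two_ne_zero) (hy.2.differentiableAt two_ne_zero) i
  rw [pd, hpd.fderiv_eq]
  exact pd_add (hf.differentiableAt_fderiv_apply _) (hg.differentiableAt_fderiv_apply _) i

theorem IsLocalMax.lap_nonpos {u : (Fin 3 → ℝ) → ℝ} {x : Fin 3 → ℝ} (h : IsLocalMax u x)
    (hu : ContDiffAt ℝ 2 u x) : lap u x ≤ 0 :=
  Finset.sum_nonpos fun _ _ => h.fderiv_fderiv_apply_nonpos hu _

theorem mem_frontier_of_isMaxOn_add_const_mul_sum_sq {Ω : Set (Fin 3 → ℝ)} (hΩo : IsOpen Ω)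
    {u : (Fin 3 → ℝ) → ℝ} (hu : ContDiffOn ℝ 2 u Ω) (hlap : ∀ x ∈ Ω, 0 ≤ lap u x)
    {ε : ℝ} (hε : 0 < ε) {z : Fin 3 → ℝ} (hz : z ∈ closure Ω)
    (hmax : IsMaxOn (fun y => u y + ε * ∑ j, y j ^ 2) (closure Ω) z) : z ∈ frontier Ω := by
  refine ⟨hz, fun hzΩ => ?_⟩
  rw [hΩo.interior_eq] at hzΩ
  have hu' : ContDiffAt ℝ 2 u z := hu.contDiffAt (hΩo.mem_nhds hzΩ)
  have hq : ContDiffAt ℝ 2 (fun y : Fin 3 → ℝ => ε * ∑ j, y j ^ 2) z := by fun_prop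
  have hnonpos := (hmax.isLocalMax (mem_of_superset (hΩo.mem_nhds hzΩ) subset_closure)).lap_nonpos
    (hu'.add hq)
  rw [lap_add hu' hq, lap_const_mul_sum_sq] at hnonpos
  linarith [hlap z hzΩ]

theorem exists_mem_frontier_isMaxOn_of_lap_nonneg {Ω : Set (Fin 3 → ℝ)} (hΩo : IsOpen Ω)
    (hΩb : Bornology.IsBounded Ω) (hne : Ω.Nonempty) {u : (Fin 3 → ℝ) → ℝ}
    (hu : ContDiffOn ℝ 2 u Ω) (huc : ContinuousOn u (closure Ω))
    (hlap : ∀ x ∈ Ω, 0 ≤ lap u x) : ∃ x₀ ∈ frontier Ω, IsMaxOn u (closure Ω) x₀ := by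
  have hcpt : IsCompact (closure Ω) := hΩb.isCompact_closure
  have hfr : (frontier Ω).Nonempty := nonempty_frontier_iff.2
    ⟨hne, fun h => noncompact_univ (Fin 3 → ℝ) (by simpa [h] using hcpt)⟩
  obtain ⟨x₀, hx₀, hx₀max⟩ := (hcpt.of_isClosed_subset isClosed_frontier
    frontier_subset_closure).exists_isMaxOn hfr (huc.mono frontier_subset_closure)
  set q : (Fin 3 → ℝ) → ℝ := fun y => ∑ j, y j ^ 2
  have hq : Continuous q := by fun_prop
  obtain ⟨R, hR⟩ := hcpt.bddAbove_image hq.continuousOn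
  have hperturbed : ∀ ε > 0, ∀ y ∈ closure Ω, u y ≤ u x₀ + ε * R := by
    intro ε hε y hy
    obtain ⟨z, hz, hzmax⟩ := hcpt.exists_isMaxOn (f := fun y => u y + ε * q y) ⟨y, hy⟩
      (huc.add (continuousOn_const.mul hq.continuousOn))
    have hzfr := mem_frontier_of_isMaxOn_add_const_mul_sum_sq hΩo hu hlap hε hz hzmax
    have hyz : u y + ε * q y ≤ u z + ε * q z := hzmax hy
    have hzx₀ : u z ≤ u x₀ := hx₀max hzfr
    have hzR : q z ≤ R := hR ⟨z, hz, rfl⟩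
    have hqy : 0 ≤ q y := by positivity
    nlinarith [mul_le_mul_of_nonneg_left hzR hε.le, mul_nonneg hε.le hqy]
  refine ⟨x₀, hx₀, fun y hy => ?_⟩
  have hlim : Tendsto (fun ε => u x₀ + ε * R) (𝓝[>] 0) (𝓝 (u x₀)) :=
    ((continuous_const.add (continuous_id.mul continuous_const)).tendsto' 0 _
      (by simp)).mono_left nhdsWithin_le_nhds
  exact ge_of_tendsto hlim (eventually_mem_nhdsWithin.mono fun ε hε => hperturbed ε hε y hy)

theorem stmt_5_general (Ω : Set (Fin 3 → ℝ)) (hΩo : IsOpen Ω) (hΩb : Bornology.IsBounded Ω)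
    (Γbody Γamb : Set (Fin 3 → ℝ))
    (hΓ : Γbody ∪ Γamb = frontier Ω)
    (k hbl hamb hr E Tbl Tamb : ℝ)
    (hk : 0 < k) (hhbl : 0 < hbl) (hhamb : 0 < hamb) (hhr : 0 < hr)
    (hE : 0 ≤ E) (hTT : Tamb ≤ Tbl)
    (n : (Fin 3 → ℝ) → (Fin 3 → ℝ)) (hn : IsOutwardNormal Ω n)
    (T : (Fin 3 → ℝ) → ℝ) (hT : ContDiffOn ℝ 2 T Ω) (hT1 : ContDiffOn ℝ 1 T (closure Ω))
    (heq : ∀ x ∈ Ω, -(k * lap T x) = 0)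
    (hRbody : ∀ x ∈ Γbody, -(k * ∑ i, n x i * pd T i x) = hbl * (T x - Tbl))
    (hRamb : ∀ x ∈ Γamb, -(k * ∑ i, n x i * pd T i x) = (hamb + hr) * (T x - Tamb) + E) :
    ∀ x ∈ Ω, T x ≤ Tbl := by
  intro x hx
  have hlap : ∀ y ∈ Ω, 0 ≤ lap T y := fun y hy =>
    ((mul_eq_zero.1 (neg_eq_zero.1 (heq y hy))).resolve_left hk.ne').ge
  obtain ⟨x₀, hx₀, hmax⟩ :=
    exists_mem_frontier_isMaxOn_of_lap_nonneg hΩo hΩb ⟨x, hx⟩ hT hT1.continuousOn hlap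
  obtain ⟨-, ε, hε, hseg⟩ := hn x₀ hx₀
  have hflux : 0 ≤ ∑ i, n x₀ i * pd T i x₀ := by
    rw [← fderiv_apply_eq_sum_pd]
    exact hmax.fderiv_apply_nonneg hε fun t ht => subset_closure (hseg t ht).2
  have hx₀Tbl : T x₀ ≤ Tbl := by
    rcases hΓ.symm ▸ hx₀ with hxbody | hxamb
    · nlinarith [hRbody x₀ hxbody]
    · nlinarith [hRamb x₀ hxamb]
  exact (hmax (subset_closure hx)).trans hx₀Tbl

/-- the ocular temperature never exceeds the blood temperature. -/
theorem stmt_5 (Ω : Set (Fin 3 → ℝ)) (hΩo : IsOpen Ω) (hΩb : Bornology.IsBounded Ω)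
    (Γbody Γamb : Set (Fin 3 → ℝ))
    (hΓ : Γbody ∪ Γamb = frontier Ω) (hΓdisj : Disjoint Γbody Γamb)
    (k hbl hamb hr E Tbl Tamb : ℝ)
    (hk : 0 < k) (hhbl : 0 < hbl) (hhamb : 0 < hamb) (hhr : 0 < hr)
    (hE : 0 ≤ E) (hTT : Tamb ≤ Tbl)
    (n : (Fin 3 → ℝ) → (Fin 3 → ℝ)) (hn : IsOutwardNormal Ω n)
    (T : (Fin 3 → ℝ) → ℝ) (hT : ContDiffOn ℝ 2 T Ω) (hT1 : ContDiffOn ℝ 1 T (closure Ω))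
    (heq : ∀ x ∈ Ω, -(k * lap T x) = 0)
    (hRbody : ∀ x ∈ Γbody, -(k * ∑ i, n x i * pd T i x) = hbl * (T x - Tbl))
    (hRamb : ∀ x ∈ Γamb, -(k * ∑ i, n x i * pd T i x) = (hamb + hr) * (T x - Tamb) + E) :
    ∀ x ∈ Ω, T x ≤ Tbl :=
  stmt_5_general Ω hΩo hΩb Γbody Γamb hΓ k hbl hamb hr E Tbl Tamb hk hhbl hhamb hhr hE hTT n hn T hT
    hT1 heq hRbody hRamb
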